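/- arXiv:2204.07706 — 3 statements merged into one kernel-verified Lean document; each statement's English description precedes it below -/
import Mathlib

section
/- Let m, k ≥ 1 and let 𝐢, 𝐣 ∈ 𝒟^m be two distinct words. If there exists exactly one pair (𝐢′, 𝐣′) ∈ 𝒟^k × 𝒟^k such that φ_{𝐢𝐢′}(F) ∩ φ_{𝐣𝐣′}(F) ≠ ∅, then φ_𝐢(F) ∩ φ_𝐣(F) is a singleton. -/
open Set

/-- The map φ_d(x) = (x + d)/N on ℝ². -/
noncomputable def phi (N : ℕ) (d : ℕ × ℕ) (x : ℝ × ℝ) : ℝ × ℝ :=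
  ((x.1 + d.1) / N, (x.2 + d.2) / N)

/-- φ_{i₁⋯iₙ} = φ_{i₁} ∘ ⋯ ∘ φ_{iₙ}. -/
noncomputable def phiWord (N : ℕ) (w : List (ℕ × ℕ)) : (ℝ × ℝ) → (ℝ × ℝ) :=
  w.foldr (fun d f => phi N d ∘ f) id

/-- Words of length n over the digit set D. -/
def GscWord (D : Finset (ℕ × ℕ)) (n : ℕ) : Type :=
  {w : List (ℕ × ℕ) // w.length = n ∧ ∀ d ∈ w, d ∈ D}

namespace GscAux

/-- integer code of a word -/
def code (N : ℕ) : List (ℕ × ℕ) → ℕ × ℕ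
  | [] => (0, 0)
  | d :: w => ((code N w).1 + N ^ w.length * d.1, (code N w).2 + N ^ w.length * d.2)

lemma phiWord_nil (N : ℕ) : phiWord N [] = id := rfl

lemma phiWord_cons (N : ℕ) (d : ℕ × ℕ) (w : List (ℕ × ℕ)) :
    phiWord N (d :: w) = phi N d ∘ phiWord N w := rfl

lemma phiWord_append (N : ℕ) (a b : List (ℕ × ℕ)) :
    phiWord N (a ++ b) = phiWord N a ∘ phiWord N b := by
  induction a with
  | nil => rfl
  | cons d a ih =>
      show phiWord N (d :: (a ++ b)) = _
      rw [phiWord_cons, ih, phiWord_cons, Function.comp_assoc]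

lemma phiWord_apply (N : ℕ) (hN : 0 < N) (w : List (ℕ × ℕ)) (x : ℝ × ℝ) :
    phiWord N w x = ((x.1 + ((code N w).1 : ℝ)) / (N : ℝ) ^ w.length,
                     (x.2 + ((code N w).2 : ℝ)) / (N : ℝ) ^ w.length) := by
  have hN' : (N : ℝ) ≠ 0 := by positivity
  induction w with
  | nil => simp [phiWord, code]
  | cons d w ih =>
      rw [phiWord_cons, Function.comp_apply, ih]
      show phi N d _ = _
      rw [phi, code, List.length_cons]
      refine Prod.ext ?_ ?_ <;> (show _ / _ = _; push_cast; field_simp; ring)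

lemma code_append (N : ℕ) (a b : List (ℕ × ℕ)) :
    code N (a ++ b) = ((code N b).1 + N ^ b.length * (code N a).1,
                       (code N b).2 + N ^ b.length * (code N a).2) := by
  induction a with
  | nil => simp [code]
  | cons d a ih =>
      show code N (d :: (a ++ b)) = _
      rw [code, ih, code]
      refine Prod.ext ?_ ?_ <;>
        (show _ = _; simp [List.length_append, pow_add]; ring)

lemma code_lt (N : ℕ) (hN : 0 < N) (w : List (ℕ × ℕ))
    (h : ∀ d ∈ w, d.1 < N ∧ d.2 < N) :
    (code N w).1 < N ^ w.length ∧ (code N w).2 < N ^ w.length := by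
  induction w with
  | nil => simp [code]
  | cons d w ih =>
      have hd := h d (List.mem_cons_self)
      have ihw := ih (fun e he => h e (List.mem_cons_of_mem d he))
      rw [code, List.length_cons]
      constructor
      · calc (code N w).1 + N ^ w.length * d.1
            < N ^ w.length + N ^ w.length * d.1 := by omega
          _ = N ^ w.length * (d.1 + 1) := by ring
          _ ≤ N ^ w.length * N := Nat.mul_le_mul_left _ (by omega)
          _ = N ^ (w.length + 1) := by ring
      · calc (code N w).2 + N ^ w.length * d.2
            < N ^ w.length + N ^ w.length * d.2 := by omega
          _ = N ^ w.length * (d.2 + 1) := by ring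
          _ ≤ N ^ w.length * N := Nat.mul_le_mul_left _ (by omega)
          _ = N ^ (w.length + 1) := by ring

lemma nat_euclid (L a b x y : ℕ) (ha : a < L) (hb : b < L)
    (h : a + L * x = b + L * y) : a = b ∧ x = y := by
  have h1 : (a + L * x) % L = a := by
    simp [Nat.add_mul_mod_self_left, Nat.mod_eq_of_lt ha]
  have h2 : (b + L * y) % L = b := by
    simp [Nat.add_mul_mod_self_left, Nat.mod_eq_of_lt hb]
  have hab : a = b := by rw [← h1, ← h2, h]
  refine ⟨hab, ?_⟩
  have hL : 0 < L := lt_of_le_of_lt (Nat.zero_le a) ha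
  have : L * x = L * y := by omega
  exact Nat.eq_of_mul_eq_mul_left hL this

lemma code_inj (N : ℕ) (hN : 0 < N) :
    ∀ (I J : List (ℕ × ℕ)), I.length = J.length →
      (∀ d ∈ I, d.1 < N ∧ d.2 < N) → (∀ d ∈ J, d.1 < N ∧ d.2 < N) →
      code N I = code N J → I = J := by
  intro I
  induction I with
  | nil =>
      intro J hlen _ _ _
      exact (List.length_eq_zero_iff.mp hlen.symm).symm ▸ rfl
  | cons d I ih =>
      intro J hlen hI hJ hcode
      cases J with
      | nil => simp at hlen
      | cons e J =>
          have hlen' : I.length = J.length := by simpa using hlen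
          have hIlt := code_lt N hN I (fun x hx => hI x (List.mem_cons_of_mem d hx))
          have hJlt := code_lt N hN J (fun x hx => hJ x (List.mem_cons_of_mem e hx))
          rw [code, code] at hcode
          have h1 := congrArg Prod.fst hcode
          have h2 := congrArg Prod.snd hcode
          simp only at h1 h2
          rw [hlen'] at h1 h2
          have e1 := nat_euclid (N ^ J.length) _ _ _ _ (hlen' ▸ hIlt.1) hJlt.1 h1
          have e2 := nat_euclid (N ^ J.length) _ _ _ _ (hlen' ▸ hIlt.2) hJlt.2 h2
          have hde : d = e := Prod.ext e1.2 e2.2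
          have hcode' : code N I = code N J := Prod.ext e1.1 e2.1
          rw [hde, ih J hlen' (fun x hx => hI x (List.mem_cons_of_mem d hx))
            (fun x hx => hJ x (List.mem_cons_of_mem e hx)) hcode']

lemma phiWord_continuous (N : ℕ) (w : List (ℕ × ℕ)) : Continuous (phiWord N w) := by
  induction w with
  | nil => exact continuous_id
  | cons d w ih =>
      rw [phiWord_cons]
      refine Continuous.comp ?_ ih
      unfold phi
      exact ((continuous_fst.add continuous_const).div_const _).prodMk
        ((continuous_snd.add continuous_const).div_const _)

lemma keyZ0 (M t s : ℤ) (hM : 2 ≤ M) (hs1 : 1 - M ≤ s) (hs2 : s ≤ M - 1)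
    (h : M * t + s = 0) : t = 0 ∧ s = 0 := by
  have ht : t = 0 := by
    by_contra h'
    rcases lt_or_gt_of_ne h' with hlt | hgt
    · have h2 : t ≤ -1 := by omega
      have h3 : M * t ≤ M * (-1) := mul_le_mul_of_nonneg_left h2 (by omega)
      linarith
    · have h2 : (1 : ℤ) ≤ t := by omega
      have h3 : M * 1 ≤ M * t := mul_le_mul_of_nonneg_left h2 (by omega)
      linarith
  subst ht
  exact ⟨rfl, by linarith⟩

lemma keyZ1 (M t s : ℤ) (hM : 2 ≤ M) (hs1 : 1 - M ≤ s) (hs2 : s ≤ M - 1)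
    (hc1 : -1 ≤ M * t + s) (hc2 : M * t + s ≤ 1) (ht : t ≠ 0) :
    M * t + s = t ∧ s = (1 - M) * t := by
  rcases lt_or_gt_of_ne ht with hlt | hgt
  · have h1 : t = -1 := by
      by_contra h'
      have h2 : t ≤ -2 := by omega
      have h3 : M * t ≤ M * (-2) := mul_le_mul_of_nonneg_left h2 (by omega)
      linarith
    subst h1
    constructor <;> (ring_nf; ring_nf at hc1 hc2; omega)
  · have h1 : t = 1 := by
      by_contra h'
      have h2 : (2 : ℤ) ≤ t := by omega
      have h3 : M * 2 ≤ M * t := mul_le_mul_of_nonneg_left h2 (by omega)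
      linarith
    subst h1
    constructor <;> (ring_nf; ring_nf at hc1 hc2; omega)

lemma coordDet (e : ℤ) (he : e ≠ 0) (h1 : -1 ≤ e) (h2 : e ≤ 1)
    (x y x' y' : ℝ) (hx0 : 0 ≤ x) (hx1 : x ≤ 1) (hy0 : 0 ≤ y) (hy1 : y ≤ 1)
    (hx0' : 0 ≤ x') (hx1' : x' ≤ 1) (hy0' : 0 ≤ y') (hy1' : y' ≤ 1)
    (hxy : x - y = (e : ℝ)) (hxy' : x' - y' = (e : ℝ)) : x = x' := by
  have h : e = 1 ∨ e = -1 := by omega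
  rcases h with h | h <;> subst h <;> push_cast at hxy hxy' <;> linarith

lemma dist_aux (c1 c2 R : ℝ) (hR : 0 < R) (a b : ℝ × ℝ) :
    dist (((a.1 + c1) / R, (a.2 + c2) / R) : ℝ × ℝ)
      (((b.1 + c1) / R, (b.2 + c2) / R) : ℝ × ℝ) = dist a b / R := by
  rw [Prod.dist_eq, Prod.dist_eq, Real.dist_eq, Real.dist_eq, Real.dist_eq, Real.dist_eq]
  have h1 : (a.1 + c1) / R - (b.1 + c1) / R = (a.1 - b.1) / R := by ring
  have h2 : (a.2 + c2) / R - (b.2 + c2) / R = (a.2 - b.2) / R := by ring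
  rw [h1, h2, abs_div, abs_div, abs_of_pos hR]
  rcases le_total |a.1 - b.1| |a.2 - b.2| with h | h
  · rw [max_eq_right h, max_eq_right ((div_le_div_iff_of_pos_right hR).mpr h)]
  · rw [max_eq_left h, max_eq_left ((div_le_div_iff_of_pos_right hR).mpr h)]

lemma coordBound (N : ℕ) (hN : 2 ≤ N) (D : Finset (ℕ × ℕ))
    (F : Set (ℝ × ℝ)) (hFne : F.Nonempty) (hFc : IsCompact F)
    (hFattr : F = ⋃ d ∈ D, phi N d '' F)
    (π : ℝ × ℝ → ℝ) (hπ : Continuous π) (g : ℕ × ℕ → ℕ)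
    (hg : ∀ d ∈ D, g d < N) (hcomm : ∀ d x, π (phi N d x) = (π x + g d) / N) :
    ∀ x ∈ F, 0 ≤ π x ∧ π x ≤ 1 := by
  have hNR : (2 : ℝ) ≤ (N : ℝ) := by exact_mod_cast hN
  have hN0 : (0 : ℝ) < N := by linarith
  obtain ⟨xM, hxM, hmax⟩ := hFc.exists_isMaxOn hFne hπ.continuousOn
  obtain ⟨xm, hxm, hmin⟩ := hFc.exists_isMinOn hFne hπ.continuousOn
  have step : ∀ x ∈ F, ∃ d ∈ D, ∃ y ∈ F, x = phi N d y := by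
    intro x hx
    rw [hFattr] at hx
    simp only [mem_iUnion, mem_image] at hx
    obtain ⟨d, hd, y, hy, hxy⟩ := hx
    exact ⟨d, hd, y, hy, hxy.symm⟩
  have hub : π xM ≤ 1 := by
    obtain ⟨d, hd, y, hy, hxy⟩ := step xM hxM
    have h1 : π y ≤ π xM := hmax hy
    have h2 : (g d : ℝ) + 1 ≤ N := by exact_mod_cast hg d hd
    have heq : π xM = (π y + g d) / N := by rw [hxy, hcomm]
    have h3 : π xM * N = π y + g d := by rw [heq]; field_simp
    by_contra hgt
    push_neg at hgt
    have h4 : 0 < (π xM - 1) * ((N : ℝ) - 1) := mul_pos (by linarith) (by linarith)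
    nlinarith
  have hlb : 0 ≤ π xm := by
    obtain ⟨d, hd, y, hy, hxy⟩ := step xm hxm
    have h1 : π xm ≤ π y := hmin hy
    have h2 : (0 : ℝ) ≤ (g d : ℝ) := by positivity
    have heq : π xm = (π y + g d) / N := by rw [hxy, hcomm]
    have h3 : π xm * N = π y + g d := by rw [heq]; field_simp
    by_contra hgt
    push_neg at hgt
    have h4 : 0 < (-π xm) * ((N : ℝ) - 1) := mul_pos (by linarith) (by linarith)
    nlinarith
  intro x hx
  exact ⟨le_trans hlb (hmin hx), le_trans (hmax hx) hub⟩

lemma phiWord_image_subset (N : ℕ) (D : Finset (ℕ × ℕ)) (F : Set (ℝ × ℝ))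
    (hFattr : F = ⋃ d ∈ D, phi N d '' F)
    (w : List (ℕ × ℕ)) (hw : ∀ d ∈ w, d ∈ D) :
    phiWord N w '' F ⊆ F := by
  induction w with
  | nil => simp [phiWord]
  | cons d w ih =>
      rw [phiWord_cons, Set.image_comp]
      have h1 : phi N d '' (phiWord N w '' F) ⊆ phi N d '' F :=
        Set.image_mono (ih (fun e he => hw e (List.mem_cons_of_mem d he)))
      refine h1.trans ?_
      have h2 : phi N d '' F ⊆ ⋃ d ∈ D, phi N d '' F := by
        intro z hz
        exact Set.mem_biUnion (hw d (List.mem_cons_self)) hz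
      rw [← hFattr] at h2
      exact h2

lemma exists_word (N : ℕ) (D : Finset (ℕ × ℕ)) (F : Set (ℝ × ℝ))
    (hFattr : F = ⋃ d ∈ D, phi N d '' F) :
    ∀ (k : ℕ), ∀ x ∈ F, ∃ w : List (ℕ × ℕ), w.length = k ∧ (∀ d ∈ w, d ∈ D) ∧
      ∃ y ∈ F, x = phiWord N w y := by
  intro k
  induction k with
  | zero => intro x hx; exact ⟨[], rfl, by simp, x, hx, rfl⟩
  | succ k ih =>
      intro x hx
      have hx' : x ∈ ⋃ d ∈ D, phi N d '' F := hFattr ▸ hx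
      simp only [mem_iUnion, mem_image] at hx'
      obtain ⟨d, hd, y, hy, hxy⟩ := hx'
      obtain ⟨w, hwl, hwd, z, hz, hyz⟩ := ih y hy
      refine ⟨d :: w, by simp [hwl], ?_, z, hz, ?_⟩
      · intro e he
        rcases List.mem_cons.mp he with h | h
        · exact h ▸ hd
        · exact hwd e h
      · rw [phiWord_cons, Function.comp_apply, ← hyz, hxy]

end GscAux

set_option maxHeartbeats 2000000 in
/-- If 𝐢 ≠ 𝐣 ∈ 𝒟^m and there is exactly one pair (𝐢′,𝐣′) ∈ 𝒟^k × 𝒟^k with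
φ_{𝐢𝐢′}(F) ∩ φ_{𝐣𝐣′}(F) ≠ ∅, then φ_𝐢(F) ∩ φ_𝐣(F) is a singleton. -/
theorem stmt15 (N : ℕ) (hN : 2 ≤ N) (D : Finset (ℕ × ℕ))
    (hD : ∀ d ∈ D, d.1 < N ∧ d.2 < N)
    (F : Set (ℝ × ℝ)) (hFne : F.Nonempty) (hFc : IsCompact F)
    (hFattr : F = ⋃ d ∈ D, phi N d '' F)
    (m k : ℕ) (hm : 1 ≤ m) (hk : 1 ≤ k)
    (I J : List (ℕ × ℕ)) (hIlen : I.length = m) (hImem : ∀ d ∈ I, d ∈ D)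
    (hJlen : J.length = m) (hJmem : ∀ d ∈ J, d ∈ D) (hne : I ≠ J)
    (huniq : ∃! p : GscWord D k × GscWord D k,
      (phiWord N (I ++ p.1.val) '' F ∩ phiWord N (J ++ p.2.val) '' F).Nonempty) :
    ∃ z : ℝ × ℝ, phiWord N I '' F ∩ phiWord N J '' F = {z} := by
  classical
  have hN0 : 0 < N := by omega
  have hNR : (2 : ℝ) ≤ (N : ℝ) := by exact_mod_cast hN
  have hbd1 : ∀ x ∈ F, 0 ≤ x.1 ∧ x.1 ≤ 1 :=
    GscAux.coordBound N hN D F hFne hFc hFattr Prod.fst continuous_fst Prod.fst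
      (fun d hd => (hD d hd).1) (fun d x => rfl)
  have hbd2 : ∀ x ∈ F, 0 ≤ x.2 ∧ x.2 ≤ 1 :=
    GscAux.coordBound N hN D F hFne hFc hFattr Prod.snd continuous_snd Prod.snd
      (fun d hd => (hD d hd).2) (fun d x => rfl)
  obtain ⟨⟨u₀, v₀⟩, hne0, huni⟩ := huniq
  simp only at hne0 huni
  have hud : ∀ d ∈ u₀.val, d.1 < N ∧ d.2 < N := fun d hd => hD d (u₀.2.2 d hd)
  have hvd : ∀ d ∈ v₀.val, d.1 < N ∧ d.2 < N := fun d hd => hD d (v₀.2.2 d hd)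
  have hId : ∀ d ∈ I, d.1 < N ∧ d.2 < N := fun d hd => hD d (hImem d hd)
  have hJd : ∀ d ∈ J, d.1 < N ∧ d.2 < N := fun d hd => hD d (hJmem d hd)
  set Iu : List (ℕ × ℕ) := I ++ u₀.val with hIu
  set Jv : List (ℕ × ℕ) := J ++ v₀.val with hJv
  have hIulen : Iu.length = m + k := by
    rw [hIu, List.length_append, hIlen, u₀.2.1]
  have hJvlen : Jv.length = m + k := by
    rw [hJv, List.length_append, hJlen, v₀.2.1]
  set P := phiWord N I '' F ∩ phiWord N J '' F with hPdef
  set Q := phiWord N Iu '' F ∩ phiWord N Jv '' F with hQdef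
  -- Q ⊆ P
  have hsubIu : phiWord N Iu '' F ⊆ phiWord N I '' F := by
    rw [hIu, GscAux.phiWord_append, Set.image_comp]
    exact Set.image_mono (GscAux.phiWord_image_subset N D F hFattr u₀.val u₀.2.2)
  have hsubJv : phiWord N Jv '' F ⊆ phiWord N J '' F := by
    rw [hJv, GscAux.phiWord_append, Set.image_comp]
    exact Set.image_mono (GscAux.phiWord_image_subset N D F hFattr v₀.val v₀.2.2)
  have hQsubP : Q ⊆ P := inter_subset_inter hsubIu hsubJv
  -- P ⊆ Q
  have hPsubQ : P ⊆ Q := by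
    rintro z ⟨⟨x, hx, hzx⟩, ⟨y, hy, hzy⟩⟩
    obtain ⟨wu, hwul, hwud, xu, hxu, hxeq⟩ := GscAux.exists_word N D F hFattr k x hx
    obtain ⟨wv, hwvl, hwvd, yv, hyv, hyeq⟩ := GscAux.exists_word N D F hFattr k y hy
    have hz1 : z ∈ phiWord N (I ++ wu) '' F := by
      rw [GscAux.phiWord_append, Set.image_comp]
      exact ⟨phiWord N wu xu, ⟨xu, hxu, rfl⟩, by rw [← hxeq]; exact hzx⟩
    have hz2 : z ∈ phiWord N (J ++ wv) '' F := by
      rw [GscAux.phiWord_append, Set.image_comp]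
      exact ⟨phiWord N wv yv, ⟨yv, hyv, rfl⟩, by rw [← hyeq]; exact hzy⟩
    have hpair := huni ⟨⟨wu, hwul, hwud⟩, ⟨wv, hwvl, hwvd⟩⟩ ⟨z, hz1, hz2⟩
    have h1 : wu = u₀.val := congrArg (fun r : GscWord D k × GscWord D k => r.1.val) hpair
    have h2 : wv = v₀.val := congrArg (fun r : GscWord D k × GscWord D k => r.2.val) hpair
    rw [h1] at hz1
    rw [h2] at hz2
    exact ⟨hz1, hz2⟩
  have hPQ : P = Q := hPsubQ.antisymm hQsubP
  -- coordinate description of points of Q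
  have hMpos : (0 : ℝ) < (N : ℝ) ^ (m + k) := by positivity
  have hQelim : ∀ z ∈ Q, ∃ x ∈ F, ∃ y ∈ F,
      x.1 + ((GscAux.code N Iu).1 : ℝ) = y.1 + ((GscAux.code N Jv).1 : ℝ) ∧
      x.2 + ((GscAux.code N Iu).2 : ℝ) = y.2 + ((GscAux.code N Jv).2 : ℝ) ∧
      z = ((x.1 + ((GscAux.code N Iu).1 : ℝ)) / (N : ℝ) ^ (m + k),
           (x.2 + ((GscAux.code N Iu).2 : ℝ)) / (N : ℝ) ^ (m + k)) := by
    rintro z ⟨⟨x, hx, hzx⟩, ⟨y, hy, hzy⟩⟩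
    rw [GscAux.phiWord_apply N hN0 Iu x, hIulen] at hzx
    rw [GscAux.phiWord_apply N hN0 Jv y, hJvlen] at hzy
    have hpair := hzx.trans hzy.symm
    have e1 := congrArg Prod.fst hpair
    have e2 := congrArg Prod.snd hpair
    simp only at e1 e2
    have hM0' : ((N : ℝ) ^ (m + k)) ≠ 0 := ne_of_gt hMpos
    refine ⟨x, hx, y, hy, ?_, ?_, hzx.symm⟩
    · field_simp at e1; linarith
    · field_simp at e2; linarith
  -- bounds on the difference of codes
  obtain ⟨z₀, hz₀⟩ := hne0
  have hz₀Q : z₀ ∈ Q := hz₀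
  obtain ⟨x₀, hx₀, y₀, hy₀, he1, he2, hz₀eq⟩ := hQelim z₀ hz₀Q
  have hc1bd : -1 ≤ ((GscAux.code N Jv).1 : ℤ) - ((GscAux.code N Iu).1 : ℤ) ∧
      ((GscAux.code N Jv).1 : ℤ) - ((GscAux.code N Iu).1 : ℤ) ≤ 1 := by
    have b1 := hbd1 x₀ hx₀
    have b2 := hbd1 y₀ hy₀
    have hr1 : (-1 : ℝ) ≤ ((GscAux.code N Jv).1 : ℝ) - ((GscAux.code N Iu).1 : ℝ) := by
      linarith
    have hr2 : ((GscAux.code N Jv).1 : ℝ) - ((GscAux.code N Iu).1 : ℝ) ≤ 1 := by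
      linarith
    exact ⟨by exact_mod_cast hr1, by exact_mod_cast hr2⟩
  have hc2bd : -1 ≤ ((GscAux.code N Jv).2 : ℤ) - ((GscAux.code N Iu).2 : ℤ) ∧
      ((GscAux.code N Jv).2 : ℤ) - ((GscAux.code N Iu).2 : ℤ) ≤ 1 := by
    have b1 := hbd2 x₀ hx₀
    have b2 := hbd2 y₀ hy₀
    have hr1 : (-1 : ℝ) ≤ ((GscAux.code N Jv).2 : ℝ) - ((GscAux.code N Iu).2 : ℝ) := by
      linarith
    have hr2 : ((GscAux.code N Jv).2 : ℝ) - ((GscAux.code N Iu).2 : ℝ) ≤ 1 := by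
      linarith
    exact ⟨by exact_mod_cast hr1, by exact_mod_cast hr2⟩
  -- algebraic decomposition of code differences
  have hA : GscAux.code N Iu = ((GscAux.code N u₀.val).1 + N ^ k * (GscAux.code N I).1,
      (GscAux.code N u₀.val).2 + N ^ k * (GscAux.code N I).2) := by
    rw [hIu, GscAux.code_append, u₀.2.1]
  have hB : GscAux.code N Jv = ((GscAux.code N v₀.val).1 + N ^ k * (GscAux.code N J).1,
      (GscAux.code N v₀.val).2 + N ^ k * (GscAux.code N J).2) := by
    rw [hJv, GscAux.code_append, v₀.2.1]
  have hAB1 : ((GscAux.code N Jv).1 : ℤ) - ((GscAux.code N Iu).1 : ℤ) =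
      (N : ℤ) ^ k * (((GscAux.code N J).1 : ℤ) - ((GscAux.code N I).1 : ℤ)) +
      (((GscAux.code N v₀.val).1 : ℤ) - ((GscAux.code N u₀.val).1 : ℤ)) := by
    rw [hA, hB]; push_cast; ring
  have hAB2 : ((GscAux.code N Jv).2 : ℤ) - ((GscAux.code N Iu).2 : ℤ) =
      (N : ℤ) ^ k * (((GscAux.code N J).2 : ℤ) - ((GscAux.code N I).2 : ℤ)) +
      (((GscAux.code N v₀.val).2 : ℤ) - ((GscAux.code N u₀.val).2 : ℤ)) := by
    rw [hA, hB]; push_cast; ring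
  have hcult := GscAux.code_lt N hN0 u₀.val hud
  rw [u₀.2.1] at hcult
  have hcvlt := GscAux.code_lt N hN0 v₀.val hvd
  rw [v₀.2.1] at hcvlt
  have hMz : (2 : ℤ) ≤ (N : ℤ) ^ k := by
    calc (2 : ℤ) ≤ (N : ℤ) := by exact_mod_cast hN
      _ = (N : ℤ) ^ 1 := (pow_one _).symm
      _ ≤ (N : ℤ) ^ k := pow_le_pow_right₀ (by exact_mod_cast hN0) hk
  have hs1b : 1 - (N : ℤ) ^ k ≤ ((GscAux.code N v₀.val).1 : ℤ) - ((GscAux.code N u₀.val).1 : ℤ) ∧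
      ((GscAux.code N v₀.val).1 : ℤ) - ((GscAux.code N u₀.val).1 : ℤ) ≤ (N : ℤ) ^ k - 1 := by
    have h1 : ((GscAux.code N u₀.val).1 : ℤ) < (N : ℤ) ^ k := by exact_mod_cast hcult.1
    have h2 : ((GscAux.code N v₀.val).1 : ℤ) < (N : ℤ) ^ k := by exact_mod_cast hcvlt.1
    have h3 : (0 : ℤ) ≤ ((GscAux.code N u₀.val).1 : ℤ) := by positivity
    have h4 : (0 : ℤ) ≤ ((GscAux.code N v₀.val).1 : ℤ) := by positivity
    omega
  have hs2b : 1 - (N : ℤ) ^ k ≤ ((GscAux.code N v₀.val).2 : ℤ) - ((GscAux.code N u₀.val).2 : ℤ) ∧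
      ((GscAux.code N v₀.val).2 : ℤ) - ((GscAux.code N u₀.val).2 : ℤ) ≤ (N : ℤ) ^ k - 1 := by
    have h1 : ((GscAux.code N u₀.val).2 : ℤ) < (N : ℤ) ^ k := by exact_mod_cast hcult.2
    have h2 : ((GscAux.code N v₀.val).2 : ℤ) < (N : ℤ) ^ k := by exact_mod_cast hcvlt.2
    have h3 : (0 : ℤ) ≤ ((GscAux.code N u₀.val).2 : ℤ) := by positivity
    have h4 : (0 : ℤ) ≤ ((GscAux.code N v₀.val).2 : ℤ) := by positivity
    omega
  have hcodeIJ : GscAux.code N I ≠ GscAux.code N J := by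
    intro h
    exact hne (GscAux.code_inj N hN0 I J (hIlen.trans hJlen.symm) hId hJd h)
  have ht12 : (((GscAux.code N J).1 : ℤ) - ((GscAux.code N I).1 : ℤ) ≠ 0) ∨
      (((GscAux.code N J).2 : ℤ) - ((GscAux.code N I).2 : ℤ) ≠ 0) := by
    by_contra hcon
    push_neg at hcon
    apply hcodeIJ
    have e1 : (GscAux.code N I).1 = (GscAux.code N J).1 := by omega
    have e2 : (GscAux.code N I).2 = (GscAux.code N J).2 := by omega
    exact Prod.ext e1 e2
  have hsub : P.Subsingleton := by
    by_cases h0 : (((GscAux.code N Jv).1 : ℤ) - ((GscAux.code N Iu).1 : ℤ) = 0) ∨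
        (((GscAux.code N Jv).2 : ℤ) - ((GscAux.code N Iu).2 : ℤ) = 0)
    · -- contraction case: the code difference equals the top-level difference
      obtain ⟨hBA1, hBA2⟩ :
          (((GscAux.code N Jv).1 : ℤ) - ((GscAux.code N Iu).1 : ℤ) =
            ((GscAux.code N J).1 : ℤ) - ((GscAux.code N I).1 : ℤ)) ∧
          (((GscAux.code N Jv).2 : ℤ) - ((GscAux.code N Iu).2 : ℤ) =
            ((GscAux.code N J).2 : ℤ) - ((GscAux.code N I).2 : ℤ)) := by
        rcases h0 with hcz | hcz
        · have hz0 := GscAux.keyZ0 ((N : ℤ) ^ k) _ _ hMz hs1b.1 hs1b.2 (by rw [← hAB1]; exact hcz)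
          have ht2 : ((GscAux.code N J).2 : ℤ) - ((GscAux.code N I).2 : ℤ) ≠ 0 := by
            rcases ht12 with h | h
            · exact absurd hz0.1 h
            · exact h
          have hz1 := GscAux.keyZ1 ((N : ℤ) ^ k) _ _ hMz hs2b.1 hs2b.2
            (by rw [← hAB2]; exact hc2bd.1) (by rw [← hAB2]; exact hc2bd.2) ht2
          constructor
          · rw [hcz, hz0.1]
          · rw [hAB2]; exact hz1.1
        · have hz0 := GscAux.keyZ0 ((N : ℤ) ^ k) _ _ hMz hs2b.1 hs2b.2 (by rw [← hAB2]; exact hcz)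
          have ht1 : ((GscAux.code N J).1 : ℤ) - ((GscAux.code N I).1 : ℤ) ≠ 0 := by
            rcases ht12 with h | h
            · exact h
            · exact absurd hz0.1 h
          have hz1 := GscAux.keyZ1 ((N : ℤ) ^ k) _ _ hMz hs1b.1 hs1b.2
            (by rw [← hAB1]; exact hc1bd.1) (by rw [← hAB1]; exact hc1bd.2) ht1
          constructor
          · rw [hAB1]; exact hz1.1
          · rw [hcz, hz0.1]
      -- build the self-similar contraction g with g ∘ φ_I = φ_{Iu}, g ∘ φ_J = φ_{Jv}
      have hkpos : (0 : ℝ) < (N : ℝ) ^ k := by positivity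
      set g : ℝ × ℝ → ℝ × ℝ := fun z =>
        ((z.1 + (((GscAux.code N Iu).1 : ℝ) - ((GscAux.code N I).1 : ℝ)) / (N : ℝ) ^ m) / (N : ℝ) ^ k,
         (z.2 + (((GscAux.code N Iu).2 : ℝ) - ((GscAux.code N I).2 : ℝ)) / (N : ℝ) ^ m) / (N : ℝ) ^ k)
        with hgdef
      have hB1R : ((GscAux.code N Jv).1 : ℝ) =
          ((GscAux.code N Iu).1 : ℝ) + ((GscAux.code N J).1 : ℝ) - ((GscAux.code N I).1 : ℝ) := by
        have hh : (((GscAux.code N Jv).1 : ℤ) : ℝ) - (((GscAux.code N Iu).1 : ℤ) : ℝ)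
            = (((GscAux.code N J).1 : ℤ) : ℝ) - (((GscAux.code N I).1 : ℤ) : ℝ) := by
          exact_mod_cast hBA1
        push_cast at hh
        linarith
      have hB2R : ((GscAux.code N Jv).2 : ℝ) =
          ((GscAux.code N Iu).2 : ℝ) + ((GscAux.code N J).2 : ℝ) - ((GscAux.code N I).2 : ℝ) := by
        have hh : (((GscAux.code N Jv).2 : ℤ) : ℝ) - (((GscAux.code N Iu).2 : ℤ) : ℝ)
            = (((GscAux.code N J).2 : ℤ) : ℝ) - (((GscAux.code N I).2 : ℤ) : ℝ) := by
          exact_mod_cast hBA2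
        push_cast at hh
        linarith
      have hgI : ∀ x : ℝ × ℝ, g (phiWord N I x) = phiWord N Iu x := by
        intro x
        rw [GscAux.phiWord_apply N hN0 I x, GscAux.phiWord_apply N hN0 Iu x, hIlen, hIulen]
        simp only [hgdef]
        refine Prod.ext ?_ ?_ <;> (simp only; rw [pow_add]; field_simp; try ring)
      have hgJ : ∀ x : ℝ × ℝ, g (phiWord N J x) = phiWord N Jv x := by
        intro x
        rw [GscAux.phiWord_apply N hN0 J x, GscAux.phiWord_apply N hN0 Jv x, hJlen, hJvlen,
          hB1R, hB2R]
        simp only [hgdef]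
        refine Prod.ext ?_ ?_ <;> (simp only; rw [pow_add]; field_simp; try ring)
      have hdist : ∀ a b : ℝ × ℝ, dist (g a) (g b) = dist a b / (N : ℝ) ^ k := by
        intro a b
        simp only [hgdef]
        exact GscAux.dist_aux _ _ _ hkpos a b
      have hginj : Function.Injective g := by
        intro a b hab
        have hh := hdist a b
        rw [hab, dist_self] at hh
        have h0 : dist a b = 0 := by
          rcases div_eq_zero_iff.mp hh.symm with h | h
          · exact h
          · exact absurd h (ne_of_gt hkpos)
        exact dist_eq_zero.mp h0
      have hcompI : g ∘ phiWord N I = phiWord N Iu := funext hgI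
      have hcompJ : g ∘ phiWord N J = phiWord N Jv := funext hgJ
      have hgIimg : g '' (phiWord N I '' F) = phiWord N Iu '' F := by
        rw [← Set.image_comp, hcompI]
      have hgJimg : g '' (phiWord N J '' F) = phiWord N Jv '' F := by
        rw [← Set.image_comp, hcompJ]
      have hQgP : Q = g '' P := by
        calc Q = phiWord N Iu '' F ∩ phiWord N Jv '' F := hQdef
          _ = g '' (phiWord N I '' F) ∩ g '' (phiWord N J '' F) := by rw [hgIimg, hgJimg]
          _ = g '' (phiWord N I '' F ∩ phiWord N J '' F) := (Set.image_inter hginj).symm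
          _ = g '' P := by rw [← hPdef]
      have hPg : P = g '' P := hPQ.trans hQgP
      have hPc : IsCompact P := by
        rw [hPdef]
        exact (hFc.image (GscAux.phiWord_continuous N I)).inter_right
          (hFc.image (GscAux.phiWord_continuous N J)).isClosed
      have hkR2 : (2 : ℝ) ≤ (N : ℝ) ^ k := by exact_mod_cast hMz
      have hdiam0 : Metric.diam P = 0 := by
        have hbP : Bornology.IsBounded P := hPc.isBounded
        have h1 : Metric.diam P ≤ Metric.diam P / (N : ℝ) ^ k := by
          apply Metric.diam_le_of_forall_dist_le
            (div_nonneg Metric.diam_nonneg (le_of_lt hkpos))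
          intro z hz z' hz'
          rw [hPg] at hz hz'
          obtain ⟨a, ha, rfl⟩ := hz
          obtain ⟨b, hb, rfl⟩ := hz'
          rw [hdist]
          gcongr
          exact Metric.dist_le_diam_of_mem hbP ha hb
        have h2 : 0 ≤ Metric.diam P := Metric.diam_nonneg
        have h3 : Metric.diam P * (N : ℝ) ^ k ≤ Metric.diam P := (le_div_iff₀ hkpos).mp h1
        have h4 : Metric.diam P ≤ 0 := by nlinarith
        exact le_antisymm h4 h2
      intro z hz z' hz'
      have hd := Metric.dist_le_diam_of_mem hPc.isBounded hz hz'
      rw [hdiam0] at hd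
      exact dist_le_zero.mp hd
    · -- corner case: both coordinates of the difference are nonzero
      push_neg at h0
      rw [hPQ]
      rintro z hz z' hz'
      obtain ⟨x, hx, y, hy, f1, f2, hzeq⟩ := hQelim z hz
      obtain ⟨x', hx', y', hy', f1', f2', hzeq'⟩ := hQelim z' hz'
      have bx1 := hbd1 x hx
      have by1 := hbd1 y hy
      have bx1' := hbd1 x' hx'
      have by1' := hbd1 y' hy'
      have bx2 := hbd2 x hx
      have by2 := hbd2 y hy
      have bx2' := hbd2 x' hx'
      have by2' := hbd2 y' hy'
      have g1 : x.1 = x'.1 := by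
        refine GscAux.coordDet (((GscAux.code N Jv).1 : ℤ) - ((GscAux.code N Iu).1 : ℤ))
          h0.1 hc1bd.1 hc1bd.2 x.1 y.1 x'.1 y'.1 bx1.1 bx1.2 by1.1 by1.2
          bx1'.1 bx1'.2 by1'.1 by1'.2 ?_ ?_
        · push_cast; linarith
        · push_cast; linarith
      have g2 : x.2 = x'.2 := by
        refine GscAux.coordDet (((GscAux.code N Jv).2 : ℤ) - ((GscAux.code N Iu).2 : ℤ))
          h0.2 hc2bd.1 hc2bd.2 x.2 y.2 x'.2 y'.2 bx2.1 bx2.2 by2.1 by2.2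
          bx2'.1 bx2'.2 by2'.1 by2'.2 ?_ ?_
        · push_cast; linarith
        · push_cast; linarith
      rw [hzeq, hzeq', g1, g2]
  have hz₀P : z₀ ∈ P := by rw [hPQ]; exact hz₀Q
  exact ⟨z₀, Set.eq_singleton_iff_unique_mem.mpr ⟨hz₀P, fun w hw => hsub hw hz₀P⟩⟩
end

section
/- Suppose F is a GSC and for some m ≥ 1 there is a partition 𝒟^m = I ⊔ J into nonempty disjoint sets such that (⋃_{𝐢∈I} φ_𝐢(F)) ∩ (⋃_{𝐣∈J} φ_𝐣(F)) = {x} for some x ∈ F. Then F is fragile, i.e., there is a partition 𝒟 = 𝒟₁ ⊔ 𝒟₂ into nonempty disjoint sets with (⋃_{i∈𝒟₁} φ_i(F)) ∩ (⋃_{i∈𝒟₂} φ_i(F)) a singleton. -/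
open Set

lemma phiWord_nil (N : ℕ) : phiWord N [] = id := rfl

lemma phiWord_cons (N : ℕ) (d : ℕ × ℕ) (w : List (ℕ × ℕ)) :
    phiWord N (d :: w) = phi N d ∘ phiWord N w := rfl

lemma phiWord_singleton (N : ℕ) (d : ℕ × ℕ) : phiWord N [d] = phi N d :=
  Function.comp_id _

lemma phi_continuous (N : ℕ) (d : ℕ × ℕ) : Continuous (phi N d) := by
  unfold phi; fun_prop

lemma phiWord_continuous (N : ℕ) (w : List (ℕ × ℕ)) : Continuous (phiWord N w) := by
  induction w with
  | nil => exact continuous_id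
  | cons d t ih => rw [phiWord_cons]; exact (phi_continuous N d).comp ih

lemma phi_injective (N : ℕ) (hN : N ≠ 0) (d : ℕ × ℕ) : Function.Injective (phi N d) := by
  intro a b h
  have hN' : (N : ℝ) ≠ 0 := Nat.cast_ne_zero.mpr hN
  simp only [phi, Prod.mk.injEq] at h
  obtain ⟨h1, h2⟩ := h
  have e1 : a.1 = b.1 := by field_simp at h1; linarith
  have e2 : a.2 = b.2 := by field_simp at h2; linarith
  exact Prod.ext e1 e2

/-- Words of length m over D. -/
def Words (D : Finset (ℕ × ℕ)) (m : ℕ) : Set (List (ℕ × ℕ)) :=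
  {w : List (ℕ × ℕ) | w.length = m ∧ ∀ d ∈ w, d ∈ D}

lemma words_finite (D : Finset (ℕ × ℕ)) : ∀ m, (Words D m).Finite := by
  intro m
  induction m with
  | zero =>
    apply Set.Finite.subset (finite_singleton ([] : List (ℕ × ℕ)))
    rintro w ⟨hl, -⟩
    simp [List.length_eq_zero_iff.mp hl]
  | succ m ih =>
    apply Set.Finite.subset (((D.finite_toSet).prod ih).image fun p => p.1 :: p.2)
    rintro w ⟨hl, hw⟩
    cases w with
    | nil => simp at hl
    | cons a t =>
      refine ⟨(a, t), ⟨hw a (List.mem_cons_self), ?_, fun d hd => hw d (List.mem_cons_of_mem _ hd)⟩, rfl⟩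
      simpa using hl

section Main

variable (N : ℕ) (D : Finset (ℕ × ℕ)) (F : Set (ℝ × ℝ))

lemma cell_subset (hFattr : F = ⋃ d ∈ D, phi N d '' F) :
    ∀ w : List (ℕ × ℕ), (∀ d ∈ w, d ∈ D) → phiWord N w '' F ⊆ F := by
  intro w
  induction w with
  | nil => intro _; rw [phiWord_nil, image_id]
  | cons a t ih =>
    intro hw
    rw [phiWord_cons, image_comp]
    refine subset_trans (image_mono (ih fun d hd => hw d (List.mem_cons_of_mem _ hd))) ?_
    intro y hy
    rw [hFattr]
    exact mem_biUnion (hw a (List.mem_cons_self)) hy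

lemma cells_cover (hFattr : F = ⋃ d ∈ D, phi N d '' F) :
    ∀ m, (⋃ w ∈ Words D m, phiWord N w '' F) = F := by
  intro m
  induction m with
  | zero =>
    apply subset_antisymm
    · exact iUnion₂_subset fun w hw => cell_subset N D F hFattr w hw.2
    · intro x hx
      exact mem_biUnion (show ([] : List (ℕ × ℕ)) ∈ Words D 0 by
        exact ⟨rfl, by simp⟩) (by rwa [phiWord_nil, image_id])
  | succ m ih =>
    apply subset_antisymm
    · exact iUnion₂_subset fun w hw => cell_subset N D F hFattr w hw.2
    · intro x hx
      rw [hFattr] at hx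
      obtain ⟨d, hd, y, hyF, rfl⟩ := by simpa only [mem_iUnion, exists_prop] using hx
      rw [← ih] at hyF
      obtain ⟨w, hw, z, hzF, rfl⟩ := by simpa only [mem_iUnion, exists_prop] using hyF
      refine mem_biUnion (show d :: w ∈ Words D (m + 1) from
        ⟨by simp [hw.1], fun e he => ?_⟩) ⟨z, hzF, rfl⟩
      rcases List.mem_cons.mp he with h | h
      · exact h ▸ hd
      · exact hw.2 e h

lemma key (hN : 2 ≤ N) (hFne : F.Nonempty) (hFc : IsCompact F)
    (hFattr : F = ⋃ d ∈ D, phi N d '' F) (hFconn : IsConnected F) :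
    ∀ m, 1 ≤ m → ∀ (I J : Set (List (ℕ × ℕ))) (x : ℝ × ℝ),
      I ∪ J = Words D m → I ∩ J = ∅ → I.Nonempty → J.Nonempty → x ∈ F →
      (⋃ w ∈ I, phiWord N w '' F) ∩ (⋃ w ∈ J, phiWord N w '' F) = {x} →
      ∃ D₁ D₂ : Finset (ℕ × ℕ), D₁ ∪ D₂ = D ∧ Disjoint D₁ D₂ ∧
        D₁.Nonempty ∧ D₂.Nonempty ∧
        ∃ z : ℝ × ℝ, (⋃ d ∈ D₁, phi N d '' F) ∩ (⋃ d ∈ D₂, phi N d '' F) = {z} := by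
  classical
  have hN0 : N ≠ 0 := by omega
  intro m hm
  induction m, hm using Nat.le_induction with
  | base =>
    intro I J x hcov hdisj hIne hJne hxF hsing
    refine ⟨D.filter (fun d => [d] ∈ I), D.filter (fun d => [d] ∈ J), ?_, ?_, ?_, ?_, x, ?_⟩
    · ext d
      simp only [Finset.mem_union, Finset.mem_filter]
      constructor
      · rintro (⟨h, -⟩ | ⟨h, -⟩) <;> exact h
      · intro hd
        have : [d] ∈ I ∪ J := by
          rw [hcov]; exact ⟨rfl, by simpa using hd⟩
        rcases this with h | h
        · exact Or.inl ⟨hd, h⟩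
        · exact Or.inr ⟨hd, h⟩
    · rw [Finset.disjoint_left]
      intro d hd1 hd2
      have h1 := (Finset.mem_filter.mp hd1).2
      have h2 := (Finset.mem_filter.mp hd2).2
      exact absurd (hdisj ▸ mem_inter h1 h2 : [d] ∈ (∅ : Set _)) (notMem_empty _)
    · obtain ⟨w, hw⟩ := hIne
      have hwW : w ∈ Words D 1 := hcov ▸ mem_union_left _ hw
      obtain ⟨a, rfl⟩ := List.length_eq_one_iff.mp hwW.1
      exact ⟨a, Finset.mem_filter.mpr ⟨hwW.2 a (List.mem_cons_self), hw⟩⟩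
    · obtain ⟨w, hw⟩ := hJne
      have hwW : w ∈ Words D 1 := hcov ▸ mem_union_right _ hw
      obtain ⟨a, rfl⟩ := List.length_eq_one_iff.mp hwW.1
      exact ⟨a, Finset.mem_filter.mpr ⟨hwW.2 a (List.mem_cons_self), hw⟩⟩
    · have hA : (⋃ d ∈ D.filter (fun d => [d] ∈ I), phi N d '' F)
          = ⋃ w ∈ I, phiWord N w '' F := by
        apply subset_antisymm
        · refine iUnion₂_subset fun d hd => ?_
          rw [← phiWord_singleton N d]
          exact subset_biUnion_of_mem (u := fun w => phiWord N w '' F) (Finset.mem_filter.mp hd).2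
        · refine iUnion₂_subset fun w hw => ?_
          have hwW : w ∈ Words D 1 := hcov ▸ mem_union_left _ hw
          obtain ⟨a, rfl⟩ := List.length_eq_one_iff.mp hwW.1
          rw [phiWord_singleton N a]
          exact subset_biUnion_of_mem (u := fun d => phi N d '' F)
            (Finset.mem_filter.mpr ⟨hwW.2 a (List.mem_cons_self), hw⟩)
      have hB : (⋃ d ∈ D.filter (fun d => [d] ∈ J), phi N d '' F)
          = ⋃ w ∈ J, phiWord N w '' F := by
        apply subset_antisymm
        · refine iUnion₂_subset fun d hd => ?_
          rw [← phiWord_singleton N d]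
          exact subset_biUnion_of_mem (u := fun w => phiWord N w '' F) (Finset.mem_filter.mp hd).2
        · refine iUnion₂_subset fun w hw => ?_
          have hwW : w ∈ Words D 1 := hcov ▸ mem_union_right _ hw
          obtain ⟨a, rfl⟩ := List.length_eq_one_iff.mp hwW.1
          rw [phiWord_singleton N a]
          exact subset_biUnion_of_mem (u := fun d => phi N d '' F)
            (Finset.mem_filter.mpr ⟨hwW.2 a (List.mem_cons_self), hw⟩)
      rw [hA, hB]; exact hsing
  | succ m hm ih =>
    intro I J x hcov hdisj hIne hJne hxF hsing
    by_cases hsplit : ∃ d, (∃ w, d :: w ∈ I) ∧ (∃ w, d :: w ∈ J)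
    · -- Case A: some first letter has words in both I and J; descend one level.
      obtain ⟨d, ⟨wI, hwI⟩, ⟨wJ, hwJ⟩⟩ := hsplit
      have hwIW : d :: wI ∈ Words D (m + 1) := hcov ▸ mem_union_left _ hwI
      have hdD : d ∈ D := hwIW.2 d (List.mem_cons_self)
      set I' : Set (List (ℕ × ℕ)) := {w | d :: w ∈ I} with hI'
      set J' : Set (List (ℕ × ℕ)) := {w | d :: w ∈ J} with hJ'
      have hcov' : I' ∪ J' = Words D m := by
        ext w
        constructor
        · intro hw
          have hmem : d :: w ∈ Words D (m + 1) := by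
            rw [← hcov]
            rcases hw with h | h
            · exact mem_union_left _ h
            · exact mem_union_right _ h
          exact ⟨by simpa using hmem.1, fun e he => hmem.2 e (List.mem_cons_of_mem _ he)⟩
        · intro hw
          have hmem : d :: w ∈ I ∪ J := by
            rw [hcov]
            refine ⟨by simp [hw.1], fun e he => ?_⟩
            rcases List.mem_cons.mp he with h | h
            · exact h ▸ hdD
            · exact hw.2 e h
          rcases hmem with h | h
          · exact mem_union_left _ h
          · exact mem_union_right _ h
      have hdisj' : I' ∩ J' = ∅ := by
        ext w
        simp only [mem_inter_iff, mem_empty_iff_false, iff_false, not_and]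
        intro h1 h2
        exact absurd (hdisj ▸ mem_inter h1 h2 : d :: w ∈ (∅ : Set _)) (notMem_empty _)
      set A' : Set (ℝ × ℝ) := ⋃ w ∈ I', phiWord N w '' F with hA'
      set B' : Set (ℝ × ℝ) := ⋃ w ∈ J', phiWord N w '' F with hB'
      have hI'sub : I' ⊆ Words D m := hcov' ▸ subset_union_left
      have hJ'sub : J' ⊆ Words D m := hcov' ▸ subset_union_right
      have hclA : IsClosed A' :=
        ((words_finite D m).subset hI'sub).isClosed_biUnion fun w _ =>
          (hFc.image (phiWord_continuous N w)).isClosed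
      have hclB : IsClosed B' :=
        ((words_finite D m).subset hJ'sub).isClosed_biUnion fun w _ =>
          (hFc.image (phiWord_continuous N w)).isClosed
      have hA'F : A' ⊆ F := iUnion₂_subset fun w hw =>
        cell_subset N D F hFattr w (hI'sub hw).2
      have hB'F : B' ⊆ F := iUnion₂_subset fun w hw =>
        cell_subset N D F hFattr w (hJ'sub hw).2
      have hcovF : F ⊆ A' ∪ B' := by
        intro y hy
        rw [← cells_cover N D F hFattr m] at hy
        obtain ⟨w, hw, hyw⟩ := by simpa only [mem_iUnion, exists_prop] using hy
        rcases (hcov' ▸ hw : w ∈ I' ∪ J') with h | h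
        · exact mem_union_left _ (mem_biUnion h hyw)
        · exact mem_union_right _ (mem_biUnion h hyw)
      obtain ⟨p, hpF⟩ := hFne
      have hFA : (F ∩ A').Nonempty :=
        ⟨phiWord N wI p, hA'F (mem_biUnion hwI ⟨p, hpF, rfl⟩),
          mem_biUnion (show wI ∈ I' from hwI) ⟨p, hpF, rfl⟩⟩
      have hFB : (F ∩ B').Nonempty :=
        ⟨phiWord N wJ p, hB'F (mem_biUnion hwJ ⟨p, hpF, rfl⟩),
          mem_biUnion (show wJ ∈ J' from hwJ) ⟨p, hpF, rfl⟩⟩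
      have hne : (F ∩ (A' ∩ B')).Nonempty :=
        isPreconnected_closed_iff.mp hFconn.isPreconnected A' B' hclA hclB hcovF hFA hFB
      obtain ⟨y0, -, hy0⟩ := hne
      have him : ∀ z ∈ A' ∩ B', phi N d z = x := by
        intro z hz
        have : phi N d z ∈ (⋃ w ∈ I, phiWord N w '' F) ∩ (⋃ w ∈ J, phiWord N w '' F) := by
          constructor
          · obtain ⟨w, hw, u, huF, hu⟩ := by
              simpa only [hA', mem_iUnion, exists_prop] using hz.1
            exact mem_biUnion (show d :: w ∈ I from hw)
              ⟨u, huF, by rw [phiWord_cons]; simp [hu]⟩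
          · obtain ⟨w, hw, u, huF, hu⟩ := by
              simpa only [hB', mem_iUnion, exists_prop] using hz.2
            exact mem_biUnion (show d :: w ∈ J from hw)
              ⟨u, huF, by rw [phiWord_cons]; simp [hu]⟩
        rw [hsing] at this
        exact this
      have hAB : A' ∩ B' = {y0} := by
        apply subset_antisymm
        · intro z hz
          have : phi N d z = phi N d y0 := by rw [him z hz, him y0 hy0]
          exact phi_injective N hN0 d this
        · exact singleton_subset_iff.mpr hy0
      exact ih I' J' y0 hcov' hdisj' ⟨wI, hwI⟩ ⟨wJ, hwJ⟩ (hA'F hy0.1) hAB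
    · -- Case B: each first letter goes entirely to I or to J.
      push_neg at hsplit
      refine ⟨D.filter (fun d => ∃ w, d :: w ∈ I), D.filter (fun d => ∃ w, d :: w ∈ J),
        ?_, ?_, ?_, ?_, x, ?_⟩
      · ext d
        simp only [Finset.mem_union, Finset.mem_filter]
        constructor
        · rintro (⟨h, -⟩ | ⟨h, -⟩) <;> exact h
        · intro hd
          have : d :: List.replicate m d ∈ I ∪ J := by
            rw [hcov]
            refine ⟨by simp, fun e he => ?_⟩
            rcases List.mem_cons.mp he with h | h
            · exact h ▸ hd
            · exact (List.eq_of_mem_replicate h) ▸ hd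
          rcases this with h | h
          · exact Or.inl ⟨hd, _, h⟩
          · exact Or.inr ⟨hd, _, h⟩
      · rw [Finset.disjoint_left]
        intro d hd1 hd2
        obtain ⟨w0, hw0⟩ := (Finset.mem_filter.mp hd2).2
        exact hsplit d (Finset.mem_filter.mp hd1).2 w0 hw0
      · obtain ⟨w, hw⟩ := hIne
        have hwW : w ∈ Words D (m + 1) := hcov ▸ mem_union_left _ hw
        cases w with
        | nil => simp [Words] at hwW
        | cons a t =>
          exact ⟨a, Finset.mem_filter.mpr ⟨hwW.2 a (List.mem_cons_self), t, hw⟩⟩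
      · obtain ⟨w, hw⟩ := hJne
        have hwW : w ∈ Words D (m + 1) := hcov ▸ mem_union_right _ hw
        cases w with
        | nil => simp [Words] at hwW
        | cons a t =>
          exact ⟨a, Finset.mem_filter.mpr ⟨hwW.2 a (List.mem_cons_self), t, hw⟩⟩
      · have hA : (⋃ d ∈ D.filter (fun d => ∃ w, d :: w ∈ I), phi N d '' F)
            = ⋃ w ∈ I, phiWord N w '' F := by
          apply subset_antisymm
          · rintro y hy
            obtain ⟨e, he, u, huF, rfl⟩ := by simpa only [mem_iUnion, exists_prop] using hy
            obtain ⟨heD, hew⟩ := Finset.mem_filter.mp he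
            rw [← cells_cover N D F hFattr m] at huF
            obtain ⟨v, hv, z, hzF, rfl⟩ := by simpa only [mem_iUnion, exists_prop] using huF
            have hmem : e :: v ∈ I ∪ J := by
              rw [hcov]
              refine ⟨by simp [hv.1], fun f hf => ?_⟩
              rcases List.mem_cons.mp hf with h | h
              · exact h ▸ heD
              · exact hv.2 f h
            have hmemI : e :: v ∈ I := by
              rcases hmem with h | h
              · exact h
              · exact absurd h (hsplit e hew v)
            exact mem_biUnion hmemI ⟨z, hzF, by rw [phiWord_cons]; rfl⟩
          · rintro y hy
            obtain ⟨w, hw, u, huF, rfl⟩ := by simpa only [mem_iUnion, exists_prop] using hy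
            have hwW : w ∈ Words D (m + 1) := hcov ▸ mem_union_left _ hw
            cases w with
            | nil => simp [Words] at hwW
            | cons a t =>
              refine mem_biUnion (Finset.mem_filter.mpr
                ⟨hwW.2 a (List.mem_cons_self), t, hw⟩) ?_
              refine ⟨phiWord N t u, ?_, by rw [phiWord_cons]; rfl⟩
              exact cell_subset N D F hFattr t
                (fun f hf => hwW.2 f (List.mem_cons_of_mem _ hf)) ⟨u, huF, rfl⟩
        have hB : (⋃ d ∈ D.filter (fun d => ∃ w, d :: w ∈ J), phi N d '' F)
            = ⋃ w ∈ J, phiWord N w '' F := by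
          apply subset_antisymm
          · rintro y hy
            obtain ⟨e, he, u, huF, rfl⟩ := by simpa only [mem_iUnion, exists_prop] using hy
            obtain ⟨heD, hew⟩ := Finset.mem_filter.mp he
            rw [← cells_cover N D F hFattr m] at huF
            obtain ⟨v, hv, z, hzF, rfl⟩ := by simpa only [mem_iUnion, exists_prop] using huF
            have hmem : e :: v ∈ I ∪ J := by
              rw [hcov]
              refine ⟨by simp [hv.1], fun f hf => ?_⟩
              rcases List.mem_cons.mp hf with h | h
              · exact h ▸ heD
              · exact hv.2 f h
            have hmemJ : e :: v ∈ J := by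
              rcases hmem with h | h
              · obtain ⟨w0, hw0⟩ := hew
                exact absurd hw0 (hsplit e ⟨v, h⟩ w0)
              · exact h
            exact mem_biUnion hmemJ ⟨z, hzF, by rw [phiWord_cons]; rfl⟩
          · rintro y hy
            obtain ⟨w, hw, u, huF, rfl⟩ := by simpa only [mem_iUnion, exists_prop] using hy
            have hwW : w ∈ Words D (m + 1) := hcov ▸ mem_union_right _ hw
            cases w with
            | nil => simp [Words] at hwW
            | cons a t =>
              refine mem_biUnion (Finset.mem_filter.mpr
                ⟨hwW.2 a (List.mem_cons_self), t, hw⟩) ?_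
              refine ⟨phiWord N t u, ?_, by rw [phiWord_cons]; rfl⟩
              exact cell_subset N D F hFattr t
                (fun f hf => hwW.2 f (List.mem_cons_of_mem _ hf)) ⟨u, huF, rfl⟩
        rw [hA, hB]; exact hsing

end Main

/-- If for some m ≥ 1 the set of level-m words splits into nonempty disjoint
I and J with (⋃_{𝐢∈I} φ_𝐢(F)) ∩ (⋃_{𝐣∈J} φ_𝐣(F)) a singleton, then F is fragile. -/
theorem stmt16 (N : ℕ) (hN : 2 ≤ N) (D : Finset (ℕ × ℕ))
    (hD : ∀ d ∈ D, d.1 < N ∧ d.2 < N) (hDcard : 1 < D.card ∧ D.card < N ^ 2)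
    (F : Set (ℝ × ℝ)) (hFne : F.Nonempty) (hFc : IsCompact F)
    (hFattr : F = ⋃ d ∈ D, phi N d '' F) (hFconn : IsConnected F)
    (m : ℕ) (hm : 1 ≤ m) (I J : Set (List (ℕ × ℕ)))
    (hcover : I ∪ J = {w : List (ℕ × ℕ) | w.length = m ∧ ∀ d ∈ w, d ∈ D})
    (hdisj : I ∩ J = ∅) (hIne : I.Nonempty) (hJne : J.Nonempty)
    (x : ℝ × ℝ) (hxF : x ∈ F)
    (hsing : (⋃ w ∈ I, phiWord N w '' F) ∩ (⋃ w ∈ J, phiWord N w '' F) = {x}) :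
    ∃ D₁ D₂ : Finset (ℕ × ℕ), D₁ ∪ D₂ = D ∧ Disjoint D₁ D₂ ∧
      D₁.Nonempty ∧ D₂.Nonempty ∧
      ∃ z : ℝ × ℝ, (⋃ d ∈ D₁, phi N d '' F) ∩ (⋃ d ∈ D₂, phi N d '' F) = {z} :=
  key N D F hN hFne hFc hFattr hFconn m hm I J x hcover hdisj hIne hJne hxF hsing
end

section
/- Let F be a connected GSC and suppose x ∈ F is a cut point such that some connected component 𝒞 of F \ {x} satisfies 𝒞 ∩ ([0,1]×{1}) = ∅ and 𝒞 ∩ ({1}×[0,1]) = ∅. Let i* = (a*, b*) where a* = min{a : (a,b) ∈ 𝒟} and b* = min{b : (a*,b) ∈ 𝒟}. Then φ_{i*}(𝒞) is a connected component of F \ {φ_{i*}(x)}; in particular φ_{i*}(x) is also a cut point of F. -/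
open Set

namespace Stmt17Aux

/-- Explicit inverse of `phi N d`. -/
noncomputable def psi (N : ℕ) (d : ℕ × ℕ) (q : ℝ × ℝ) : ℝ × ℝ :=
  (q.1 * N - d.1, q.2 * N - d.2)

lemma unit_coords {p : ℝ × ℝ} (h : p ∈ Icc ((0, 0) : ℝ × ℝ) (1, 1)) :
    0 ≤ p.1 ∧ p.1 ≤ 1 ∧ 0 ≤ p.2 ∧ p.2 ≤ 1 := by
  rw [mem_Icc, Prod.le_def, Prod.le_def] at h
  exact ⟨h.1.1, h.2.1, h.1.2, h.2.2⟩

lemma phi_cont (N : ℕ) (d : ℕ × ℕ) : Continuous (phi N d) := by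
  unfold phi; fun_prop

lemma psi_cont (N : ℕ) (d : ℕ × ℕ) : Continuous (psi N d) := by
  unfold psi; fun_prop

lemma psi_phi (N : ℕ) (hN : (N : ℝ) ≠ 0) (d : ℕ × ℕ) (p : ℝ × ℝ) :
    psi N d (phi N d p) = p := by
  unfold phi psi
  have h1 : (p.1 + d.1) / N * N - d.1 = p.1 := by field_simp; ring
  have h2 : (p.2 + d.2) / N * N - d.2 = p.2 := by field_simp; ring
  simp only [h1, h2]

lemma phi_dist (N : ℕ) (hN : (0 : ℝ) < N) (d : ℕ × ℕ) (p q : ℝ × ℝ) :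
    dist (phi N d p) (phi N d q) = dist p q / N := by
  simp only [phi, Prod.dist_eq, Real.dist_eq]
  have h1 : (p.1 + d.1) / N - (q.1 + d.1) / N = (p.1 - q.1) / N := by ring
  have h2 : (p.2 + d.2) / N - (q.2 + d.2) / N = (p.2 - q.2) / N := by ring
  rw [h1, h2, abs_div, abs_div, abs_of_pos hN]
  rcases le_total |p.1 - q.1| |p.2 - q.2| with h | h
  · rw [max_eq_right h, max_eq_right ((div_le_div_iff_of_pos_right hN).mpr h)]
  · rw [max_eq_left h, max_eq_left ((div_le_div_iff_of_pos_right hN).mpr h)]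

/-- Level-`n` cells: a finite cover of `F` by compact preconnected subsets of
diameter at most `N⁻ⁿ`. -/
lemma cells (N : ℕ) (hN : 2 ≤ N) (D : Finset (ℕ × ℕ)) (F : Set (ℝ × ℝ))
    (hFc : IsCompact F) (hFpc : IsPreconnected F)
    (hFattr : F = ⋃ d ∈ D, phi N d '' F)
    (hFsub : F ⊆ Icc (0, 0) (1, 1)) :
    ∀ n : ℕ, ∃ 𝒜 : Finset (Set (ℝ × ℝ)),
      (∀ A ∈ 𝒜, IsCompact A ∧ IsPreconnected A ∧ A ⊆ F ∧
        Metric.diam A ≤ 1 / (N : ℝ) ^ n) ∧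
      F ⊆ ⋃ A ∈ 𝒜, A := by
  classical
  have hN0 : (0 : ℝ) < N := by exact_mod_cast (by omega : 0 < N)
  have hcell : ∀ d ∈ D, phi N d '' F ⊆ F := by
    intro d hd
    intro q hq
    rw [hFattr]
    exact mem_iUnion₂.mpr ⟨d, hd, hq⟩
  intro n
  induction n with
  | zero =>
    refine ⟨{F}, ?_, ?_⟩
    · intro A hA
      rw [Finset.mem_singleton] at hA
      subst hA
      refine ⟨hFc, hFpc, subset_rfl, ?_⟩
      rw [pow_zero]
      apply Metric.diam_le_of_forall_dist_le (by norm_num)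
      intro p hp q hq
      obtain ⟨a1, a2, a3, a4⟩ := unit_coords (hFsub hp)
      obtain ⟨b1, b2, b3, b4⟩ := unit_coords (hFsub hq)
      simp only [Prod.dist_eq, Real.dist_eq]
      apply max_le
      · rw [abs_sub_le_iff]; constructor <;> linarith
      · rw [abs_sub_le_iff]; constructor <;> linarith
    · intro q hq
      exact mem_iUnion₂.mpr ⟨F, Finset.mem_singleton_self F, hq⟩
  | succ n ih =>
    obtain ⟨𝒜, h𝒜, hcov⟩ := ih
    refine ⟨(D ×ˢ 𝒜).image (fun y => phi N y.1 '' y.2), ?_, ?_⟩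
    · intro A' hA'
      simp only [Finset.mem_image, Finset.mem_product] at hA'
      obtain ⟨⟨d, A⟩, ⟨hd, hA⟩, rfl⟩ := hA'
      obtain ⟨hc, hp, hsub, hdiam⟩ := h𝒜 A hA
      refine ⟨hc.image (phi_cont N d), hp.image _ (phi_cont N d).continuousOn,
        (image_mono hsub).trans (hcell d hd), ?_⟩
      apply Metric.diam_le_of_forall_dist_le (by positivity)
      rintro p' ⟨p, hp', rfl⟩ q' ⟨q, hq', rfl⟩
      rw [phi_dist N hN0 d p q]
      have h1 : dist p q ≤ Metric.diam A :=
        Metric.dist_le_diam_of_mem hc.isBounded hp' hq'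
      have h2 : dist p q / N ≤ (1 / (N : ℝ) ^ n) / N :=
        (div_le_div_iff_of_pos_right hN0).mpr (h1.trans hdiam)
      refine h2.trans (le_of_eq ?_)
      rw [div_div, ← pow_succ]
    · intro q hq
      conv at hq => rw [hFattr]
      obtain ⟨d, hd, w, hw, rfl⟩ := mem_iUnion₂.mp hq
      obtain ⟨A, hA, hwA⟩ := mem_iUnion₂.mp (hcov hw)
      refine mem_iUnion₂.mpr ⟨phi N d '' A, ?_, ⟨w, hwA, rfl⟩⟩
      exact Finset.mem_image.mpr ⟨(d, A), Finset.mem_product.mpr ⟨hd, hA⟩, rfl⟩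

/-- Any point of `F` distinct from `x'` has an open neighbourhood whose
intersection with `F` lies in its connected component in `F \ {x'}`. -/
lemma comp_open (N : ℕ) (hN : 2 ≤ N) (D : Finset (ℕ × ℕ)) (F : Set (ℝ × ℝ))
    (hFc : IsCompact F) (hFpc : IsPreconnected F)
    (hFattr : F = ⋃ d ∈ D, phi N d '' F)
    (hFsub : F ⊆ Icc (0, 0) (1, 1))
    (x' c : ℝ × ℝ) (hc : c ∈ F) (hne : c ≠ x') :
    ∃ O : Set (ℝ × ℝ), IsOpen O ∧ c ∈ O ∧
      O ∩ F ⊆ connectedComponentIn (F \ {x'}) c := by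
  classical
  have hN0 : (0 : ℝ) < N := by exact_mod_cast (by omega : 0 < N)
  have hdp : 0 < dist c x' := dist_pos.mpr hne
  have hr1 : (1 : ℝ) / N < 1 := by
    rw [div_lt_one hN0]
    exact_mod_cast (by omega : 1 < N)
  obtain ⟨n, hn⟩ := exists_pow_lt_of_lt_one hdp hr1
  have hn' : 1 / (N : ℝ) ^ n < dist c x' := by rwa [← one_div_pow]
  obtain ⟨𝒜, h𝒜, hcov⟩ := cells N hN D F hFc hFpc hFattr hFsub n
  set T := 𝒜.filter (fun A => c ∉ A) with hT
  have hZc : IsClosed (⋃ A ∈ T, A) := by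
    apply Set.Finite.isClosed_biUnion T.finite_toSet
    intro A hA
    exact (h𝒜 A (Finset.mem_of_mem_filter A hA)).1.isClosed
  refine ⟨(⋃ A ∈ T, A)ᶜ, hZc.isOpen_compl, ?_, ?_⟩
  · intro h
    obtain ⟨A, hA, hcA⟩ := mem_iUnion₂.mp h
    exact (Finset.mem_filter.mp hA).2 hcA
  · rintro q ⟨hqO, hqF⟩
    obtain ⟨A, hA, hqA⟩ := mem_iUnion₂.mp (hcov hqF)
    have hcA : c ∈ A := by
      by_contra hcA
      exact hqO (mem_iUnion₂.mpr ⟨A, Finset.mem_filter.mpr ⟨hA, hcA⟩, hqA⟩)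
    -- the union of all cells containing c
    set W := ⋃ B ∈ 𝒜.filter (fun B => c ∈ B), B with hW
    have hWp : IsPreconnected W := by
      have := isPreconnected_sUnion c (↑(𝒜.filter (fun B => c ∈ B)))
        (fun s hs => (Finset.mem_filter.mp hs).2)
        (fun s hs => (h𝒜 s (Finset.mem_of_mem_filter s hs)).2.1)
      rwa [sUnion_eq_biUnion, Finset.set_biUnion_coe] at this
    have hWsub : W ⊆ F \ {x'} := by
      rintro w hw
      obtain ⟨B, hB, hwB⟩ := mem_iUnion₂.mp hw
      obtain ⟨hB𝒜, hcB⟩ := Finset.mem_filter.mp hB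
      obtain ⟨hBc, hBp, hBF, hBd⟩ := h𝒜 B hB𝒜
      refine ⟨hBF hwB, ?_⟩
      intro hwx
      rw [mem_singleton_iff] at hwx
      subst hwx
      have : dist c w ≤ Metric.diam B :=
        Metric.dist_le_diam_of_mem hBc.isBounded hcB hwB
      linarith [this.trans hBd]
    have hcW : c ∈ W :=
      mem_iUnion₂.mpr ⟨A, Finset.mem_filter.mpr ⟨hA, hcA⟩, hcA⟩
    have hqW : q ∈ W :=
      mem_iUnion₂.mpr ⟨A, Finset.mem_filter.mpr ⟨hA, hcA⟩, hqA⟩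
    exact hWp.subset_connectedComponentIn hcW hWsub hqW

end Stmt17Aux

open Stmt17Aux in
/-- If x is a cut point of a connected GSC F and 𝒞 is a connected component of
F \ {x} avoiding the top edge [0,1]×{1} and the right edge {1}×[0,1], and i* is
the lexicographically least digit of 𝒟, then φ_{i*}(𝒞) is a connected component
of F \ {φ_{i*}(x)}; in particular φ_{i*}(x) is again a cut point of F. -/
theorem stmt17 (N : ℕ) (hN : 2 ≤ N) (D : Finset (ℕ × ℕ))
    (hD : ∀ d ∈ D, d.1 < N ∧ d.2 < N) (hDcard : 1 < D.card ∧ D.card < N ^ 2)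
    (F : Set (ℝ × ℝ)) (hFne : F.Nonempty) (hFc : IsCompact F)
    (hFattr : F = ⋃ d ∈ D, phi N d '' F) (hFconn : IsConnected F)
    (hFsub : F ⊆ Icc (0, 0) (1, 1))
    (x : ℝ × ℝ) (hx : x ∈ F) (hcut : ¬ IsPreconnected (F \ {x}))
    (y₀ : ℝ × ℝ) (hy₀ : y₀ ∈ F \ {x})
    (C : Set (ℝ × ℝ)) (hC : C = connectedComponentIn (F \ {x}) y₀)
    (htop : C ∩ {p : ℝ × ℝ | p.2 = 1 ∧ p.1 ∈ Icc (0 : ℝ) 1} = ∅)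
    (hrig : C ∩ {p : ℝ × ℝ | p.1 = 1 ∧ p.2 ∈ Icc (0 : ℝ) 1} = ∅)
    (istar : ℕ × ℕ) (histar : istar ∈ D)
    (hmin1 : ∀ d ∈ D, istar.1 ≤ d.1)
    (hmin2 : ∀ d ∈ D, d.1 = istar.1 → istar.2 ≤ d.2) :
    phi N istar '' C =
        connectedComponentIn (F \ {phi N istar x}) (phi N istar y₀) ∧
      ¬ IsPreconnected (F \ {phi N istar x}) := by
  classical
  have hN0 : (0 : ℝ) < N := by exact_mod_cast (by omega : 0 < N)
  have hNne : (N : ℝ) ≠ 0 := ne_of_gt hN0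
  have hinj : Function.Injective (phi N istar) := by
    intro p q h
    have h' := congrArg (psi N istar) h
    rwa [psi_phi N hNne, psi_phi N hNne] at h'
  have hFpc : IsPreconnected F := hFconn.isPreconnected
  have hcell : ∀ d ∈ D, phi N d '' F ⊆ F := by
    intro d hd
    intro q hq
    rw [hFattr]
    exact mem_iUnion₂.mpr ⟨d, hd, hq⟩
  have hφF : phi N istar '' F ⊆ F := hcell istar histar
  set R := ⋃ d ∈ D.erase istar, phi N d '' F with hR
  have hRclosed : IsClosed R := by
    apply Set.Finite.isClosed_biUnion (D.erase istar).finite_toSet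
    intro d _
    exact (hFc.image (phi_cont N d)).isClosed
  have hcover : ∀ q ∈ F, q ∈ phi N istar '' F ∨ q ∈ R := by
    intro q hq
    conv at hq => rw [hFattr]
    obtain ⟨d, hd, hqd⟩ := mem_iUnion₂.mp hq
    by_cases hdi : d = istar
    · left; rwa [hdi] at hqd
    · right; exact mem_iUnion₂.mpr ⟨d, Finset.mem_erase.mpr ⟨hdi, hd⟩, hqd⟩
  -- basic facts about C
  have hy₀C : y₀ ∈ C := by rw [hC]; exact mem_connectedComponentIn hy₀
  have hCsub : C ⊆ F \ {x} := by rw [hC]; exact connectedComponentIn_subset _ _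
  have hCpc : IsPreconnected C := by rw [hC]; exact isPreconnected_connectedComponentIn
  -- C contains no point with a coordinate equal to 1
  have hedge : ∀ z ∈ C, z.1 ≠ 1 ∧ z.2 ≠ 1 := by
    intro z hz
    have hzF : z ∈ F := (hCsub hz).1
    obtain ⟨a1, a2, a3, a4⟩ := unit_coords (hFsub hzF)
    constructor
    · intro h1
      have hmem : z ∈ C ∩ {p : ℝ × ℝ | p.1 = 1 ∧ p.2 ∈ Icc (0 : ℝ) 1} :=
        ⟨hz, h1, a3, a4⟩
      rw [hrig] at hmem
      exact hmem
    · intro h2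
      have hmem : z ∈ C ∩ {p : ℝ × ℝ | p.2 = 1 ∧ p.1 ∈ Icc (0 : ℝ) 1} :=
        ⟨hz, h2, a1, a2⟩
      rw [htop] at hmem
      exact hmem
  -- gateway lemma: other cells meet the i* cell only at images of edge points
  have hGW : ∀ z ∈ F, ∀ d ∈ D, d ≠ istar →
      phi N istar z ∈ phi N d '' F → z.1 = 1 ∨ z.2 = 1 := by
    rintro z hz d hd hdne ⟨w, hw, hwe⟩
    obtain ⟨a1, a2, a3, a4⟩ := unit_coords (hFsub hz)
    obtain ⟨b1, b2, b3, b4⟩ := unit_coords (hFsub hw)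
    have e1 : (w.1 + (d.1 : ℝ)) / N = (z.1 + (istar.1 : ℝ)) / N :=
      congrArg Prod.fst hwe
    have e2 : (w.2 + (d.2 : ℝ)) / N = (z.2 + (istar.2 : ℝ)) / N :=
      congrArg Prod.snd hwe
    have e1' : w.1 + (d.1 : ℝ) = z.1 + (istar.1 : ℝ) := by
      field_simp at e1; exact e1
    have e2' : w.2 + (d.2 : ℝ) = z.2 + (istar.2 : ℝ) := by
      field_simp at e2; exact e2
    by_cases h1 : d.1 = istar.1
    · right
      have hd2 : istar.2 ≤ d.2 := hmin2 d hd h1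
      have hd2ne : istar.2 ≠ d.2 := by
        intro h
        exact hdne (Prod.ext h1 h.symm)
      have hd2' : istar.2 + 1 ≤ d.2 := by omega
      have hcast : (istar.2 : ℝ) + 1 ≤ (d.2 : ℝ) := by exact_mod_cast hd2'
      linarith
    · left
      have hd1 : istar.1 + 1 ≤ d.1 := by
        have := hmin1 d hd; omega
      have hcast : (istar.1 : ℝ) + 1 ≤ (d.1 : ℝ) := by exact_mod_cast hd1
      linarith
  have hCR : ∀ z ∈ C, phi N istar z ∉ R := by
    intro z hz hzR
    obtain ⟨d, hd, hzd⟩ := mem_iUnion₂.mp hzR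
    obtain ⟨hdne, hdD⟩ := Finset.mem_erase.mp hd
    rcases hGW z (hCsub hz).1 d hdD hdne hzd with h | h
    · exact (hedge z hz).1 h
    · exact (hedge z hz).2 h
  -- closure of C
  have hclosF : closure C ⊆ F :=
    closure_minimal (hCsub.trans diff_subset) hFc.isClosed
  have hclosC : closure C ⊆ C ∪ {x} := by
    intro z hzc
    by_cases hzx : z = x
    · right; exact hzx
    · left
      have hzF : z ∈ F := hclosF hzc
      have hins : IsPreconnected (insert z C) := by
        apply hCpc.subset_closure (subset_insert z C)
        exact insert_subset hzc subset_closure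
      have hsub : insert z C ⊆ F \ {x} :=
        insert_subset ⟨hzF, hzx⟩ hCsub
      have : insert z C ⊆ connectedComponentIn (F \ {x}) y₀ :=
        hins.subset_connectedComponentIn (mem_insert_iff.mpr (Or.inr hy₀C)) hsub
      rw [← hC] at this
      exact this (mem_insert z C)
  have hclosφC : closure (phi N istar '' C) ⊆ phi N istar '' C ∪ {phi N istar x} := by
    have hclcomp : IsCompact (closure C) :=
      IsCompact.of_isClosed_subset hFc isClosed_closure hclosF
    have h1 : closure (phi N istar '' C) ⊆ phi N istar '' closure C :=
      closure_minimal (image_mono subset_closure)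
        (hclcomp.image (phi_cont N istar)).isClosed
    refine h1.trans ?_
    rintro q ⟨z, hz, rfl⟩
    rcases hclosC hz with h | h
    · left; exact ⟨z, h, rfl⟩
    · right
      rw [mem_singleton_iff] at h ⊢
      rw [h]
  have hφCsub : phi N istar '' C ⊆ F \ {phi N istar x} := by
    rintro q ⟨z, hz, rfl⟩
    refine ⟨hφF ⟨z, (hCsub hz).1, rfl⟩, ?_⟩
    rw [mem_singleton_iff]
    intro h
    exact (hCsub hz).2 (mem_singleton_iff.mpr (hinj h))
  -- relative openness of C in F
  have hOex : ∀ c, c ∈ C → ∃ O, IsOpen O ∧ c ∈ O ∧ O ∩ F ⊆ C := by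
    intro c hc
    have hcne : c ≠ x := by
      intro h
      exact (hCsub hc).2 (mem_singleton_iff.mpr h)
    obtain ⟨O, hO, hcO, hsub⟩ :=
      comp_open N hN D F hFc hFpc hFattr hFsub x c (hCsub hc).1 hcne
    refine ⟨O, hO, hcO, ?_⟩
    have hc' : c ∈ connectedComponentIn (F \ {x}) y₀ := by rw [← hC]; exact hc
    have heq : connectedComponentIn (F \ {x}) c = C := by
      rw [hC]
      exact (connectedComponentIn_eq hc').symm
    rwa [heq] at hsub
  choose O hO1 hO2 hO3 using hOex
  set U₀ : Set (ℝ × ℝ) := ⋃ c, ⋃ h : c ∈ C, O c h with hU₀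
  have hU₀open : IsOpen U₀ :=
    isOpen_iUnion fun c => isOpen_iUnion fun h => hO1 c h
  set u := psi N istar ⁻¹' U₀ ∩ Rᶜ with hu_def
  have hu : IsOpen u :=
    (hU₀open.preimage (psi_cont N istar)).inter hRclosed.isOpen_compl
  have huC : u ∩ (F \ {phi N istar x}) ⊆ phi N istar '' C := by
    rintro q ⟨⟨hqU, hqR⟩, hqF, hqx⟩
    rcases hcover q hqF with hK | hRR
    · obtain ⟨z, hzF, rfl⟩ := hK
      rw [mem_preimage, psi_phi N hNne] at hqU
      obtain ⟨c, hc⟩ := mem_iUnion.mp hqU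
      obtain ⟨hcC, hzO⟩ := mem_iUnion.mp hc
      have hzC : z ∈ C := hO3 c hcC ⟨hzO, hzF⟩
      exact ⟨z, hzC, rfl⟩
    · exact absurd hRR hqR
  have hCu : phi N istar '' C ⊆ u := by
    rintro q ⟨z, hz, rfl⟩
    refine ⟨?_, hCR z hz⟩
    rw [mem_preimage, psi_phi N hNne]
    exact mem_iUnion.mpr ⟨z, mem_iUnion.mpr ⟨hz, hO2 z hz⟩⟩
  -- the component downstairs
  have hφy₀ : phi N istar y₀ ∈ F \ {phi N istar x} := hφCsub ⟨y₀, hy₀C, rfl⟩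
  have hφy₀C : phi N istar y₀ ∈ phi N istar '' C := ⟨y₀, hy₀C, rfl⟩
  set S := connectedComponentIn (F \ {phi N istar x}) (phi N istar y₀) with hS_def
  have hsub1 : phi N istar '' C ⊆ S :=
    (hCpc.image _ (phi_cont N istar).continuousOn).subset_connectedComponentIn
      hφy₀C hφCsub
  have hSsub : S ⊆ F \ {phi N istar x} := connectedComponentIn_subset _ _
  have hSpc : IsPreconnected S := isPreconnected_connectedComponentIn
  set v := (closure (phi N istar '' C))ᶜ with hv_def
  have hv : IsOpen v := isClosed_closure.isOpen_compl
  have hsub2 : S ⊆ phi N istar '' C := by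
    by_contra hcon
    obtain ⟨s, hsS, hsC⟩ := not_subset.mp hcon
    have hSuv : S ⊆ u ∪ v := by
      intro t ht
      by_cases htc : t ∈ closure (phi N istar '' C)
      · left
        rcases hclosφC htc with h | h
        · exact hCu h
        · exact absurd h ((hSsub ht).2)
      · right; exact htc
    have hsv : s ∈ v := by
      rcases hSuv hsS with h | h
      · exact absurd (huC ⟨h, hSsub hsS⟩) hsC
      · exact h
    obtain ⟨p, hpS, hpu, hpv⟩ :=
      hSpc u v hu hv hSuv ⟨phi N istar y₀, hsub1 hφy₀C, hCu hφy₀C⟩ ⟨s, hsS, hsv⟩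
    exact hpv (subset_closure (huC ⟨hpu, hSsub hpS⟩))
  refine ⟨hsub1.antisymm hsub2, ?_⟩
  intro hpre
  have hCne : ¬ (F \ {x} ⊆ C) := by
    intro h
    apply hcut
    have heq : C = F \ {x} := hCsub.antisymm h
    rw [← heq]
    exact hCpc
  obtain ⟨z, hzF, hzC⟩ := not_subset.mp hCne
  have hφz : phi N istar z ∈ F \ {phi N istar x} := by
    refine ⟨hφF ⟨z, hzF.1, rfl⟩, ?_⟩
    rw [mem_singleton_iff]
    intro h
    exact hzF.2 (mem_singleton_iff.mpr (hinj h))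
  have hall : F \ {phi N istar x} ⊆ S :=
    hpre.subset_connectedComponentIn hφy₀ subset_rfl
  obtain ⟨z', hz', he⟩ := hsub2 (hall hφz)
  exact hzC (by rwa [hinj he] at hz')
end
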